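/- With the semi-discrete Green function Gⁿ as defined, for all t > 0 and x ∈ [0,1], ∫₀¹ (Gⁿ(t,x,y))² dy ≤ 1 + √(π/(8t)). -/

import Mathlib

open Real MeasureTheory

/-- Left grid point `⌊ny⌋/n`. -/
noncomputable def kappa (n : ℕ) (y : ℝ) : ℝ := (⌊(n : ℝ) * y⌋ : ℝ) / n

/-- `e_j(x) = e^{2πi j x}`. -/
noncomputable def efun (j : ℕ) (x : ℝ) : ℂ :=
  Complex.exp (2 * (π : ℂ) * Complex.I * (j : ℂ) * (x : ℂ))

/-- Piecewise-linear interpolation of `e_j` on the grid `{k/n}`. -/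
noncomputable def efunInterp (n j : ℕ) (x : ℝ) : ℂ :=
  efun j (kappa n x) +
    (((n : ℝ) * x - (n : ℝ) * kappa n x : ℝ) : ℂ) *
      (efun j (kappa n x + 1 / n) - efun j (kappa n x))

/-- Eigenvalues `λⱼⁿ = -4n² sin²(jπ/n)`. -/
noncomputable def lamn (n j : ℕ) : ℝ := -4 * (n : ℝ) ^ 2 * Real.sin ((j : ℝ) * π / n) ^ 2

/-- The semi-discrete Green function
`Gⁿ(t,x,y) = ∑_{j=0}^{n-1} e^{λⱼⁿ t} eⱼⁿ(x) ēⱼ(κₙ(y))`. -/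
noncomputable def Gsemi (n : ℕ) (t x y : ℝ) : ℂ :=
  ∑ j ∈ Finset.range n,
    (Real.exp (lamn n j * t) : ℂ) * efunInterp n j x * (starRingEnd ℂ) (efun j (kappa n y))

/-! The integral sees `y` only through the grid point `κₙ(y)`, so it is the mean of `(Re Gⁿ)²`
over the grid `{k/n}`. On that grid the `eⱼ` are orthogonal, so by Parseval the mean of `|Gⁿ|²`
is `∑ⱼ e^{2λⱼt} |eⱼⁿ(x)|² ≤ ∑ⱼ e^{2λⱼt}`, the interpolant `eⱼⁿ(x)` being a convex combination of
two unimodular values. Jordan's inequality `sin θ ≥ 2θ/π` gives `λⱼ ≤ -16 min(j, n - j)²`, and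
comparing the resulting Gaussian sum with `∫₀^∞ e^{-32tz²} dz` bounds it by `1 + √(π/(32t))`. -/

open Finset ComplexConjugate

lemma natCast_mul_kappa {n : ℕ} (hn : n ≠ 0) (y : ℝ) : (n : ℝ) * kappa n y = ⌊(n : ℝ) * y⌋ := by
  rw [kappa, mul_div_cancel₀ _ (Nat.cast_ne_zero.2 hn)]

lemma kappa_eq_of_mem_Ico {n k : ℕ} (hn : n ≠ 0) {y : ℝ}
    (hy : y ∈ Set.Ico ((k : ℝ) / n) ((k + 1) / n)) : kappa n y = k / n := by
  have hn' : (0 : ℝ) < n := by positivity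
  have hfloor : ⌊(n : ℝ) * y⌋ = k := by
    rw [Int.floor_eq_iff, Int.cast_natCast, ← div_le_iff₀' hn', ← lt_div_iff₀' hn']
    exact hy
  rw [kappa, hfloor, Int.cast_natCast]

lemma integral_comp_kappa {E : Type*} [NormedAddCommGroup E] [NormedSpace ℝ E] [CompleteSpace E]
    {n : ℕ} (hn : n ≠ 0) (H : ℝ → E) :
    ∫ y in (0 : ℝ)..1, H (kappa n y) = (n : ℝ)⁻¹ • ∑ k ∈ range n, H (k / n) := by
  have hn' : (0 : ℝ) < n := by positivity
  have hstep : ∀ k : ℕ, ((k + 1 : ℕ) : ℝ) / n - k / n = (n : ℝ)⁻¹ := fun k => by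
    push_cast; field_simp; ring
  have hconst : ∀ k : ℕ, Set.EqOn (fun y => H (kappa n y)) (fun _ => H (k / n))
      (Set.uIoo ((k : ℝ) / n) ((k + 1 : ℕ) / n)) := fun k y hy => by
    rw [Set.uIoo_of_le (by linarith [hstep k, inv_pos.2 hn'])] at hy
    simp only [kappa_eq_of_mem_Ico hn ⟨hy.1.le, by exact_mod_cast hy.2⟩]
  calc ∫ y in (0 : ℝ)..1, H (kappa n y)
      = ∑ k ∈ range n, ∫ y in (k : ℝ) / n..((k + 1 : ℕ) : ℝ) / n, H (kappa n y) := by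
        rw [intervalIntegral.sum_integral_adjacent_intervals
          fun k _ => intervalIntegrable_const.congr_uIoo (hconst k).symm]
        simp [hn]
    _ = (n : ℝ)⁻¹ • ∑ k ∈ range n, H (k / n) := by
        rw [smul_sum]
        refine sum_congr rfl fun k _ => ?_
        rw [intervalIntegral.integral_congr_uIoo (hconst k), intervalIntegral.integral_const,
          hstep]

lemma natCast_mul_sub_kappa_mem_Icc (n : ℕ) (x : ℝ) :
    (n : ℝ) * x - n * kappa n x ∈ Set.Icc (0 : ℝ) 1 := by
  obtain rfl | hn := eq_or_ne n 0
  · simp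
  rw [natCast_mul_kappa hn, Int.self_sub_floor]
  exact ⟨Int.fract_nonneg _, (Int.fract_lt_one _).le⟩

lemma norm_efun (j : ℕ) (u : ℝ) : ‖efun j u‖ = 1 := by
  rw [efun, Complex.norm_exp]
  simp [Complex.mul_re, Complex.mul_im]

lemma norm_efunInterp_le (n j : ℕ) (x : ℝ) : ‖efunInterp n j x‖ ≤ 1 := by
  have hmem := (convex_closedBall (0 : ℂ) 1).add_smul_sub_mem
    (by simp [norm_efun] : efun j (kappa n x) ∈ Metric.closedBall 0 1)
    (by simp [norm_efun] : efun j (kappa n x + 1 / n) ∈ Metric.closedBall 0 1)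
    (natCast_mul_sub_kappa_mem_Icc n x)
  simpa [efunInterp, Complex.real_smul] using hmem

lemma efun_natCast_div_mul_conj (n j l k : ℕ) :
    efun l (k / n) * conj (efun j (k / n))
      = (Complex.exp (2 * π * Complex.I / n) ^ ((l : ℤ) - j)) ^ k := by
  rw [efun, efun, ← Complex.exp_conj, ← Complex.exp_add, ← Complex.exp_int_mul,
    ← Complex.exp_nat_mul]
  congr 1
  simp only [map_mul, Complex.conj_I, Complex.conj_ofNat, Complex.conj_natCast,
    Complex.conj_ofReal]
  push_cast
  ring

lemma sum_efun_mul_conj_efun {n j l : ℕ} (hj : j < n) (hl : l < n) :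
    ∑ k ∈ range n, efun l (k / n) * conj (efun j (k / n)) = if j = l then (n : ℂ) else 0 := by
  have hζ := Complex.isPrimitiveRoot_exp n (by omega)
  set w := Complex.exp (2 * π * Complex.I / n) ^ ((l : ℤ) - j)
  rw [sum_congr rfl fun k _ => efun_natCast_div_mul_conj n j l k]
  split_ifs with hjl
  · simp [hjl]
  have hw_pow : w ^ n = 1 := by
    rw [← zpow_natCast, ← zpow_mul, mul_comm ((l : ℤ) - j), zpow_mul, zpow_natCast,
      hζ.pow_eq_one, one_zpow]
  have hw_ne : w ≠ 1 := fun hw => hjl <| by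
    have := Int.eq_zero_of_abs_lt_dvd ((hζ.zpow_eq_one_iff_dvd _).1 hw) (by rw [abs_lt]; omega)
    omega
  rw [geom_sum_eq hw_ne, hw_pow, sub_self, zero_div]

lemma sum_sq_norm_sum_mul_conj_efun (n : ℕ) (c : ℕ → ℂ) :
    ∑ k ∈ range n, ‖∑ j ∈ range n, c j * conj (efun j (k / n))‖ ^ 2
      = n * ∑ j ∈ range n, ‖c j‖ ^ 2 := by
  apply Complex.ofReal_injective
  push_cast
  simp_rw [← Complex.mul_conj']
  calc ∑ k ∈ range n, (∑ j ∈ range n, c j * conj (efun j (k / n)))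
        * conj (∑ j ∈ range n, c j * conj (efun j (k / n)))
      = ∑ j ∈ range n, ∑ l ∈ range n, c j * conj (c l)
          * ∑ k ∈ range n, efun l (k / n) * conj (efun j (k / n)) := by
        simp only [map_sum, map_mul, Complex.conj_conj, sum_mul_sum]
        simp only [mul_sum]
        rw [sum_comm]
        refine sum_congr rfl fun j _ => ?_
        rw [sum_comm]
        exact sum_congr rfl fun l _ => sum_congr rfl fun k _ => by ring
    _ = n * ∑ j ∈ range n, c j * conj (c j) := by
        rw [mul_sum]
        refine sum_congr rfl fun j hj => ?_
        rw [sum_congr rfl fun l hl =>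
          by rw [sum_efun_mul_conj_efun (mem_range.1 hj) (mem_range.1 hl)]]
        simp [hj, mul_comm]

lemma two_mul_div_le_sin {m n : ℕ} (hmn : 2 * m ≤ n) : 2 * (m : ℝ) / n ≤ Real.sin (m * π / n) := by
  obtain rfl | hn := eq_or_ne n 0
  · simp
  have hn' : (0 : ℝ) < n := by positivity
  have hle : (m : ℝ) * π / n ≤ π / 2 := by
    rw [div_le_div_iff₀ hn' two_pos]
    have hmn' : (2 * m : ℝ) ≤ n := by exact_mod_cast hmn
    nlinarith [mul_le_mul_of_nonneg_left hmn' pi_pos.le]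
  calc 2 * (m : ℝ) / n = 2 / π * (m * π / n) := by field_simp
    _ ≤ Real.sin (m * π / n) := Real.mul_le_sin (by positivity) hle

lemma lamn_le {n j : ℕ} (hj : j ≤ n) : lamn n j ≤ -16 * ((min j (n - j) : ℕ) : ℝ) ^ 2 := by
  obtain rfl | hn := eq_or_ne n 0
  · simp [lamn]
  set m := min j (n - j)
  have hsin : Real.sin (j * π / n) = Real.sin (m * π / n) := by
    rcases min_choice j (n - j) with hm | hm
    · simp only [m, hm]
    · simp only [m, hm]
      rw [Nat.cast_sub hj, ← Real.sin_pi_sub]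
      congr 1
      field_simp
  have hbound : 2 * (m : ℝ) / n ≤ Real.sin (j * π / n) := hsin ▸ two_mul_div_le_sin (by omega)
  calc lamn n j = -4 * (n : ℝ) ^ 2 * Real.sin (j * π / n) ^ 2 := rfl
    _ ≤ -4 * (n : ℝ) ^ 2 * (2 * m / n) ^ 2 :=
        mul_le_mul_of_nonpos_left (pow_le_pow_left₀ (by positivity) hbound 2)
          (by nlinarith [sq_nonneg (n : ℝ)])
    _ = -16 * (m : ℝ) ^ 2 := by field_simp; ring

lemma sum_range_exp_neg_mul_sq_le {b : ℝ} (hb : 0 < b) (M : ℕ) :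
    ∑ i ∈ range M, Real.exp (-b * ((i + 1 : ℕ) : ℝ) ^ 2) ≤ √(π / b) / 2 := by
  have hanti : AntitoneOn (fun z : ℝ => Real.exp (-b * z ^ 2)) (Set.Ici 0) := fun x hx y _ hxy => by
    simp only [Real.exp_le_exp]
    nlinarith [pow_le_pow_left₀ (Set.mem_Ici.1 hx) hxy 2]
  have hint : IntegrableOn (fun z : ℝ => Real.exp (-b * z ^ 2)) (Set.Ioi 0) :=
    (integrable_exp_neg_mul_sq hb).integrableOn
  calc ∑ i ∈ range M, Real.exp (-b * ((i + 1 : ℕ) : ℝ) ^ 2)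
      ≤ ∫ z in (0 : ℝ)..M, Real.exp (-b * z ^ 2) := by
        simpa using (hanti.mono Set.Icc_subset_Ici_self).sum_le_integral (x₀ := 0) (a := M)
    _ ≤ ∫ z in Set.Ioi 0, Real.exp (-b * z ^ 2) := by
        rw [intervalIntegral.integral_of_le (by positivity)]
        exact setIntegral_mono_set hint (.of_forall fun _ => (Real.exp_pos _).le)
          Set.Ioc_subset_Ioi_self.eventuallyLE
    _ = √(π / b) / 2 := integral_gaussian_Ioi b

lemma sum_range_exp_lamn_mul_sq_le (n : ℕ) {t : ℝ} (ht : 0 < t) :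
    ∑ j ∈ range n, Real.exp (lamn n j * t) ^ 2 ≤ 1 + √(π / (32 * t)) := by
  set g : ℕ → ℝ := fun m => Real.exp (-(32 * t) * (m : ℝ) ^ 2)
  have hg : ∀ m, 0 ≤ g m := fun m => (Real.exp_pos _).le
  have hterm : ∀ j ∈ range n, Real.exp (lamn n j * t) ^ 2 ≤ g j + g (n - j) := fun j hj => by
    have hjn := (mem_range.1 hj).le
    calc Real.exp (lamn n j * t) ^ 2 ≤ g (min j (n - j)) := by
          rw [← Real.exp_nat_mul, Real.exp_le_exp, Nat.cast_ofNat]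
          linarith [mul_le_mul_of_nonneg_right (lamn_le hjn) ht.le]
      _ ≤ g j + g (n - j) := by
          rcases min_choice j (n - j) with hm | hm <;> rw [hm] <;> linarith [hg j, hg (n - j)]
  have hreflect : ∑ j ∈ range n, g (n - j) = ∑ j ∈ range n, g (j + 1) := by
    rw [← sum_range_reflect]
    exact sum_congr rfl fun j hj => by congr 1; have := mem_range.1 hj; omega
  have hshift : ∑ j ∈ range n, g j ≤ 1 + ∑ j ∈ range n, g (j + 1) := by
    calc ∑ j ∈ range n, g j ≤ ∑ j ∈ range (n + 1), g j :=
          sum_le_sum_of_subset_of_nonneg (by simp) fun j _ _ => hg j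
      _ = 1 + ∑ j ∈ range n, g (j + 1) := by rw [sum_range_succ', add_comm]; simp [g]
  have hgauss := sum_range_exp_neg_mul_sq_le (by positivity : 0 < 32 * t) n
  calc ∑ j ∈ range n, Real.exp (lamn n j * t) ^ 2
      ≤ ∑ j ∈ range n, g j + ∑ j ∈ range n, g (n - j) := by
        rw [← sum_add_distrib]; exact sum_le_sum hterm
    _ ≤ 1 + √(π / (32 * t)) := by rw [hreflect]; linarith

theorem stmt8_general (n : ℕ) (t x : ℝ) (ht : 0 < t) :
    ∫ y in (0 : ℝ)..1, ((Gsemi n t x y).re) ^ 2 ≤ 1 + Real.sqrt (π / (8 * t)) := by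
  obtain rfl | hn := eq_or_ne n 0
  · simp [Gsemi]
    positivity
  set c : ℕ → ℂ := fun j => (Real.exp (lamn n j * t) : ℂ) * efunInterp n j x
  calc ∫ y in (0 : ℝ)..1, ((Gsemi n t x y).re) ^ 2
      = (n : ℝ)⁻¹ * ∑ k ∈ range n, ((∑ j ∈ range n, c j * conj (efun j (k / n))).re) ^ 2 :=
        integral_comp_kappa hn fun u => ((∑ j ∈ range n, c j * conj (efun j u)).re) ^ 2
    _ ≤ (n : ℝ)⁻¹ * ∑ k ∈ range n, ‖∑ j ∈ range n, c j * conj (efun j (k / n))‖ ^ 2 := by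
        gcongr (n : ℝ)⁻¹ * ∑ k ∈ range n, ?_
        exact sq_le_sq' (neg_le_of_abs_le (Complex.abs_re_le_norm _)) (Complex.re_le_norm _)
    _ = ∑ j ∈ range n, ‖c j‖ ^ 2 := by
        rw [sum_sq_norm_sum_mul_conj_efun, inv_mul_cancel_left₀ (Nat.cast_ne_zero.2 hn)]
    _ ≤ ∑ j ∈ range n, Real.exp (lamn n j * t) ^ 2 := by
        gcongr with j
        rw [norm_mul, Complex.norm_real, Real.norm_of_nonneg (Real.exp_pos _).le]
        exact mul_le_of_le_one_right (Real.exp_pos _).le (norm_efunInterp_le n j x)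
    _ ≤ 1 + √(π / (32 * t)) := sum_range_exp_lamn_mul_sq_le n ht
    _ ≤ 1 + √(π / (8 * t)) := by gcongr; norm_num

theorem stmt8 (n : ℕ) (hn : 3 ≤ n) (t x : ℝ) (ht : 0 < t) (hx : x ∈ Set.Icc (0 : ℝ) 1) :
    ∫ y in (0 : ℝ)..1, ((Gsemi n t x y).re) ^ 2 ≤ 1 + Real.sqrt (π / (8 * t)) :=
  stmt8_general n t x ht
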